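/- Let D be a DAG on n ≥ 3 vertices whose skeleton is the path v1 — v2 — ... — vn. Let D' be the DAG whose skeleton is the path v2 — v1 — v3 — v4 — ... — vn, oriented so that the set of colliders of D' equals C(D) \ {v2} (where C(D) is the set of colliders of D). Then the d-separation distance between D and D' is exactly 2^(n-1) - 2. -/

import Mathlib

/-- A directed graph on `Fin n` is a binary relation; it is a DAG when it has no
directed cycle. -/
def IsDAG {n : ℕ} (D : Fin n → Fin n → Prop) : Prop :=
  ∀ v, ¬ Relation.TransGen D v v

/-- The skeleton (underlying undirected graph) of a directed graph. -/
def Skel {n : ℕ} (D : Fin n → Fin n → Prop) : SimpleGraph (Fin n) where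
  Adj a b := a ≠ b ∧ (D a b ∨ D b a)
  symm := ⟨fun a b h => ⟨h.1.symm, h.2.symm⟩⟩
  loopless := ⟨fun a h => h.1 rfl⟩

/-- `y` is a descendant of `x` (including `x` itself). -/
def Desc {n : ℕ} (D : Fin n → Fin n → Prop) (x y : Fin n) : Prop :=
  Relation.ReflTransGen D x y

/-- A path (in the skeleton) from `u` to `v`, as a list of distinct vertices with
consecutive vertices adjacent in the skeleton. -/
def IsSkelPath {n : ℕ} (D : Fin n → Fin n → Prop) (u v : Fin n) (p : List (Fin n)) : Prop :=
  p.Nodup ∧ p.head? = some u ∧ p.getLast? = some v ∧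
    p.Chain' (fun a b => D a b ∨ D b a)

/-- Position `i` of the list `p` is a collider: both neighboring arcs point into it. -/
def ColliderAt {n : ℕ} [NeZero n] (D : Fin n → Fin n → Prop) (p : List (Fin n)) (i : ℕ) : Prop :=
  D (p.getD (i - 1) default) (p.getD i default) ∧ D (p.getD (i + 1) default) (p.getD i default)

/-- The path `p` is blocked by `Z`: some internal position is a non-collider in `Z`,
or a collider none of whose descendants (including itself) lies in `Z`. -/
def Blocked {n : ℕ} [NeZero n] (D : Fin n → Fin n → Prop) (Z : Finset (Fin n))
    (p : List (Fin n)) : Prop :=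
  ∃ i : ℕ, 0 < i ∧ i + 1 < p.length ∧
    ((¬ ColliderAt D p i ∧ p.getD i default ∈ Z) ∨
      (ColliderAt D p i ∧ ∀ w, Desc D (p.getD i default) w → w ∉ Z))

/-- `u` and `v` are d-separated given `Z` in `D`. -/
def DSep {n : ℕ} [NeZero n] (D : Fin n → Fin n → Prop) (u v : Fin n)
    (Z : Finset (Fin n)) : Prop :=
  ∀ p : List (Fin n), IsSkelPath D u v p → Blocked D Z p

/-- The d-separation distance between two directed graphs on `Fin n`: the number of
triples `(u, v, Z)` with `u < v` and `Z ⊆ V \ {u, v}` on which their d-separation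
relations differ. -/
noncomputable def dSepDist {n : ℕ} [NeZero n] (D₁ D₂ : Fin n → Fin n → Prop) : ℕ :=
  Set.ncard {t : Fin n × Fin n × Finset (Fin n) |
    t.1 < t.2.1 ∧ t.1 ∉ t.2.2 ∧ t.2.1 ∉ t.2.2 ∧
    ¬ (DSep D₁ t.1 t.2.1 t.2.2 ↔ DSep D₂ t.1 t.2.1 t.2.2)}

/-- A vertex is a collider (of a DAG with a path skeleton) if it has two distinct
parents. -/
def IsColliderVertex {n : ℕ} (D : Fin n → Fin n → Prop) (k : Fin n) : Prop :=
  ∃ a b, a ≠ b ∧ D a k ∧ D b k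

/-- Two directed graphs entail the same d-separation relations. -/
def MarkovEquiv {n : ℕ} [NeZero n] (D₁ D₂ : Fin n → Fin n → Prop) : Prop :=
  ∀ (u v : Fin n) (Z : Finset (Fin n)), u ≠ v → u ∉ Z → v ∉ Z →
    (DSep D₁ u v Z ↔ DSep D₂ u v Z)

/-
In a DAG whose skeleton is a path, the path between two vertices is unique, so they are
d-connected given `Z` exactly when `Z` meets the interior of that path in precisely its
colliders. Swapping `v₁` and `v₂` changes the interior only for the pairs `(v₁, v_j)`, which
lose `v₂`, and `(v₂, v_j)`, which gain `v₁`, for `j ≥ 3`; elsewhere the colliders agree. Hence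
the two DAGs disagree on such a triple exactly when `Z` is prescribed on `{v₁, …, v_j}`, which
leaves `2^(n-j)` choices, and `∑_{j=3}^{n} 2 · 2^(n-j) = 2^(n-1) - 2`.
-/

theorem IsDAG.irrefl {n : ℕ} {D : Fin n → Fin n → Prop} (hD : IsDAG D) (a : Fin n) :
    ¬ D a a :=
  fun h => hD a (.single h)

theorem IsDAG.asymm {n : ℕ} {D : Fin n → Fin n → Prop} (hD : IsDAG D) {a b : Fin n}
    (h : D a b) : ¬ D b a :=
  fun h' => hD a (.tail (.single h) h')

theorem not_dSep_of_arc {n : ℕ} [NeZero n] {D : Fin n → Fin n → Prop} {u v : Fin n}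
    (huv : u ≠ v) (h : D u v ∨ D v u) (Z : Finset (Fin n)) : ¬ DSep D u v Z := by
  intro hd
  obtain ⟨i, hi0, hi1, -⟩ := hd [u, v] ⟨by simp [huv], rfl, rfl, List.isChain_pair.2 h⟩
  simp only [List.length_cons, List.length_nil] at hi1
  omega

theorem eq_add_of_injOn_of_unit_steps {g : ℕ → ℕ} {m : ℕ}
    (hstep : ∀ j, j + 1 < m → g j + 1 = g (j + 1) ∨ g (j + 1) + 1 = g j)
    (hinj : Set.InjOn g (Set.Iio m)) (hlt : g 0 < g (m - 1)) :
    ∀ j < m, g j = g 0 + j := by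
  -- injectivity forbids turning back, so every step goes the way the first one does
  have hturn : ∀ j, j + 1 < m → (g (j + 1) = g j + 1 ↔ g 1 = g 0 + 1) := by
    intro j hj
    induction j with
    | zero => rfl
    | succ j ih =>
      have hback : g (j + 1 + 1) ≠ g j := fun h =>
        absurd (hinj (Set.mem_Iio.2 (by omega)) (Set.mem_Iio.2 (by omega)) h) (by omega)
      have := ih (by omega)
      have := hstep j (by omega)
      have := hstep (j + 1) hj
      omega
  have hval : ∀ j < m, (g 1 = g 0 + 1 → g j = g 0 + j) ∧ (g 1 ≠ g 0 + 1 → g j + j = g 0) := by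
    intro j hj
    induction j with
    | zero => simp
    | succ j ih =>
      have := ih (by omega)
      have := hturn j hj
      have := hstep j hj
      omega
  have hm : m - 1 < m := by
    rcases m with _ | m
    · simp at hlt
    · omega
  intro j hj
  have := hval j hj
  have := hval (m - 1) hm
  by_cases h : g 1 = g 0 + 1 <;> omega

section PathSkeleton

variable {n : ℕ} {D : Fin n → Fin n → Prop} {e : Fin n ≃ Fin n}

theorem arc_iff_of_skel (hD : IsDAG D) (hskel : Skel D = (SimpleGraph.pathGraph n).comap e)
    {a b : Fin n} : D a b ∨ D b a ↔ (e a).val + 1 = (e b).val ∨ (e b).val + 1 = (e a).val := by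
  rw [← SimpleGraph.pathGraph_adj, ← SimpleGraph.comap_adj, ← hskel]
  refine ⟨fun h => ⟨?_, h⟩, And.right⟩
  rintro rfl
  exact h.elim (hD.irrefl a) (hD.irrefl a)

/-- The vertices at positions `e u, e u + 1, …, e v` along the path `e`; just `[u]` when
`e v ≤ e u`, by truncated subtraction. -/
def pathBetween (e : Fin n ≃ Fin n) (u v : Fin n) : List (Fin n) :=
  List.ofFn fun j : Fin ((e v).val - (e u).val + 1) =>
    e.symm ⟨(e u).val + j.val, by have := j.isLt; have := (e v).isLt; omega⟩

theorem length_pathBetween (u v : Fin n) :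
    (pathBetween e u v).length = (e v).val - (e u).val + 1 := by
  simp [pathBetween]

theorem val_getElem_pathBetween {u v : Fin n} {j : ℕ} (hj : j < (pathBetween e u v).length) :
    (e (pathBetween e u v)[j]).val = (e u).val + j := by
  simp only [pathBetween, List.getElem_ofFn, Equiv.apply_symm_apply]

variable (hD : IsDAG D) (hskel : Skel D = (SimpleGraph.pathGraph n).comap e)
include hD hskel

theorem IsColliderVertex.arc_of_adj {k x : Fin n} (hk : IsColliderVertex D k)
    (hx : (e x).val + 1 = (e k).val ∨ (e k).val + 1 = (e x).val) : D x k := by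
  obtain ⟨a, b, hab, hak, hbk⟩ := hk
  have ha := (arc_iff_of_skel hD hskel).1 (Or.inl hak)
  have hb := (arc_iff_of_skel hD hskel).1 (Or.inl hbk)
  have hab' : (e a).val ≠ (e b).val := fun h => hab (e.injective (Fin.ext h))
  have : (e x).val = (e a).val ∨ (e x).val = (e b).val := by omega
  rcases this with h | h
  · rwa [e.injective (Fin.ext h)]
  · rwa [e.injective (Fin.ext h)]

theorem IsColliderVertex.eq_of_desc {k w : Fin n} (hk : IsColliderVertex D k)
    (hw : Desc D k w) : w = k := by
  rcases hw.cases_head with h | ⟨c, hkc, -⟩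
  · exact h.symm
  · exact absurd (hk.arc_of_adj hD hskel ((arc_iff_of_skel hD hskel).1 (Or.inl hkc)).symm)
      (hD.asymm hkc)

theorem isSkelPath_pathBetween {u v : Fin n} (huv : (e u).val ≤ (e v).val) :
    IsSkelPath D u v (pathBetween e u v) := by
  have hlen := length_pathBetween (e := e) u v
  have hpos : ∀ j (hj : j < (pathBetween e u v).length),
      (e (pathBetween e u v)[j]).val = (e u).val + j := fun _ => val_getElem_pathBetween
  refine ⟨?_, ?_, ?_, ?_⟩
  · refine List.nodup_iff_injective_get.2 fun i j h => Fin.ext ?_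
    have := congrArg (fun x => (e x).val) h
    simp only [List.get_eq_getElem, hpos] at this
    omega
  · rw [List.head?_eq_getElem?, List.getElem?_eq_getElem (by omega)]
    exact congrArg some (e.injective (Fin.ext (hpos 0 _)))
  · rw [List.getLast?_eq_getElem?, List.getElem?_eq_getElem (by omega)]
    exact congrArg some (e.injective (Fin.ext (by rw [hpos]; omega)))
  · refine List.isChain_iff_getElem.2 fun j hj => (arc_iff_of_skel hD hskel).2 (Or.inl ?_)
    rw [hpos, hpos]
    omega

theorem IsSkelPath.eq_pathBetween {u v : Fin n} {p : List (Fin n)} (hp : IsSkelPath D u v p)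
    (huv : (e u).val < (e v).val) : p = pathBetween e u v := by
  obtain ⟨hnd, hhead, hlast, hchain⟩ := hp
  have hlen : 0 < p.length := List.length_pos_iff.2 (by rintro rfl; simp at hhead)
  have h0 : p[0] = u := by
    rwa [List.head?_eq_getElem?, List.getElem?_eq_getElem hlen, Option.some_inj] at hhead
  have hl : p[p.length - 1] = v := by
    rwa [List.getLast?_eq_getElem?, List.getElem?_eq_getElem (by omega), Option.some_inj] at hlast
  let g : ℕ → ℕ := fun j => if h : j < p.length then (e p[j]).val else 0
  have hg : ∀ j (hj : j < p.length), g j = (e p[j]).val := fun j hj => dif_pos hj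
  have hpos : ∀ j < p.length, g j = g 0 + j := by
    refine eq_add_of_injOn_of_unit_steps (fun j hj => ?_) (fun i hi k hk h => ?_) ?_
    · rw [hg j (by omega), hg (j + 1) hj]
      exact (arc_iff_of_skel hD hskel).1 (List.isChain_iff_getElem.1 hchain j hj)
    · rw [hg i hi, hg k hk] at h
      exact hnd.getElem_inj_iff.1 (e.injective (Fin.ext h))
    · rwa [hg 0 hlen, hg _ (by omega), h0, hl]
  have hlen' : p.length = (pathBetween e u v).length := by
    have := hpos (p.length - 1) (by omega)
    rw [hg _ (by omega), hg 0 hlen, h0, hl] at this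
    rw [length_pathBetween]
    omega
  refine List.ext_getElem hlen' fun j hj _ => e.injective (Fin.ext ?_)
  have := hpos j hj
  rw [hg j hj, hg 0 hlen, h0] at this
  rw [this, val_getElem_pathBetween]

variable [NeZero n]

omit hD hskel in
theorem val_getD_pathBetween {u v : Fin n} {j : ℕ} (hj : j < (pathBetween e u v).length) :
    (e ((pathBetween e u v).getD j default)).val = (e u).val + j := by
  rw [List.getD_eq_getElem _ _ hj, val_getElem_pathBetween]

theorem dSep_iff_blocked_pathBetween {u v : Fin n} (huv : (e u).val < (e v).val)
    (Z : Finset (Fin n)) : DSep D u v Z ↔ Blocked D Z (pathBetween e u v) :=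
  ⟨fun h => h _ (isSkelPath_pathBetween hD hskel huv.le),
    fun h _ hp => hp.eq_pathBetween hD hskel huv ▸ h⟩

theorem colliderAt_pathBetween_iff {u v : Fin n} {i : ℕ} (hi0 : 0 < i)
    (hi : i + 1 < (pathBetween e u v).length) :
    ColliderAt D (pathBetween e u v) i ↔
      IsColliderVertex D ((pathBetween e u v).getD i default) := by
  have hprev := val_getD_pathBetween (e := e) (u := u) (v := v) (j := i - 1) (by omega)
  have hcur := val_getD_pathBetween (e := e) (u := u) (v := v) (j := i) (by omega)
  have hnext := val_getD_pathBetween (e := e) (u := u) (v := v) (j := i + 1) hi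
  refine ⟨fun ⟨h₁, h₂⟩ => ⟨_, _, fun h => ?_, h₁, h₂⟩, fun hk => ⟨?_, ?_⟩⟩
  · have := congrArg (fun x => (e x).val) h
    simp only [hprev, hnext] at this
    omega
  · exact hk.arc_of_adj hD hskel (by omega)
  · exact hk.arc_of_adj hD hskel (by omega)

theorem blocked_pathBetween_iff {u v : Fin n} (huv : (e u).val < (e v).val)
    (Z : Finset (Fin n)) :
    Blocked D Z (pathBetween e u v) ↔ ∃ k, (e u).val < (e k).val ∧ (e k).val < (e v).val ∧
      (k ∈ Z ↔ ¬ IsColliderVertex D k) := by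
  have hlen := length_pathBetween (e := e) u v
  constructor
  · rintro ⟨i, hi0, hi, hblock⟩
    have hk := val_getD_pathBetween (e := e) (u := u) (v := v) (j := i) (by omega)
    refine ⟨(pathBetween e u v).getD i default, by omega, by omega, ?_⟩
    rw [colliderAt_pathBetween_iff hD hskel hi0 hi] at hblock
    rcases hblock with ⟨hnc, hZ⟩ | ⟨hc, hdesc⟩
    · exact iff_of_true hZ hnc
    · exact iff_of_false (hdesc _ .refl) (not_not.2 hc)
  · rintro ⟨k, hk₁, hk₂, hk⟩
    have hi : (pathBetween e u v).getD ((e k).val - (e u).val) default = k :=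
      e.injective (Fin.ext (by rw [val_getD_pathBetween (by omega)]; omega))
    refine ⟨(e k).val - (e u).val, by omega, by omega, ?_⟩
    rw [colliderAt_pathBetween_iff hD hskel (by omega) (by omega), hi]
    by_cases hc : IsColliderVertex D k
    · exact .inr ⟨hc, fun w hw hwZ => (hk.1 (hc.eq_of_desc hD hskel hw ▸ hwZ)) hc⟩
    · exact .inl ⟨hc, hk.2 hc⟩

theorem dSep_iff_exists_between {u v : Fin n} (huv : (e u).val < (e v).val)
    (Z : Finset (Fin n)) :
    DSep D u v Z ↔ ∃ k, (e u).val < (e k).val ∧ (e k).val < (e v).val ∧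
      (k ∈ Z ↔ ¬ IsColliderVertex D k) := by
  rw [dSep_iff_blocked_pathBetween hD hskel huv, blocked_pathBetween_iff hD hskel huv]

end PathSkeleton

theorem dSep_iff_exists_between_of_skel_eq_pathGraph {n : ℕ} [NeZero n]
    {D : Fin n → Fin n → Prop} (hD : IsDAG D) (hskel : Skel D = SimpleGraph.pathGraph n)
    {u v : Fin n} (huv : u < v) (Z : Finset (Fin n)) :
    DSep D u v Z ↔ ∃ k, u < k ∧ k < v ∧ (k ∈ Z ↔ ¬ IsColliderVertex D k) :=
  dSep_iff_exists_between (e := Equiv.refl _) hD (by rw [hskel]; exact SimpleGraph.comap_id.symm)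
    huv Z

section SwapZeroOne

variable {n : ℕ} {z o : Fin n} (hz : z.val = 0) (ho : o.val = 1)
include hz ho

theorem val_swap_zero_one (k : Fin n) : (Equiv.swap z o k).val =
    if k.val = 0 then 1 else if k.val = 1 then 0 else k.val := by
  rcases eq_or_ne k z with rfl | hkz
  · simp [hz, ho]
  rcases eq_or_ne k o with rfl | hko
  · simp [hz, ho]
  rw [Equiv.swap_apply_of_ne_of_ne hkz hko]
  have h0 : k.val ≠ 0 := fun h => hkz (Fin.ext (h.trans hz.symm))
  have h1 : k.val ≠ 1 := fun h => hko (Fin.ext (h.trans ho.symm))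
  simp [h0, h1]

theorem swap_zero_one_between_iff {u v k : Fin n} (huv : u < v) :
    (Equiv.swap z o u).val < (Equiv.swap z o k).val ∧
        (Equiv.swap z o k).val < (Equiv.swap z o v).val ↔
      (u < k ∧ k < v ∧ k ≠ o) ∨ (k = z ∧ u = o ∧ 2 ≤ v.val) := by
  simp only [val_swap_zero_one hz ho, Fin.lt_def, Fin.ext_iff, hz, ho] at huv ⊢
  split_ifs <;> omega

theorem swap_zero_one_mismatch_iff {c c' : Fin n → Prop} (hc' : ∀ k, c' k ↔ c k ∧ k ≠ o)
    {u v : Fin n} (huv : u < v) (Z : Finset (Fin n)) :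
    ¬ ((∃ k, u < k ∧ k < v ∧ (k ∈ Z ↔ ¬ c k)) ↔
        ∃ k, (Equiv.swap z o u).val < (Equiv.swap z o k).val ∧
          (Equiv.swap z o k).val < (Equiv.swap z o v).val ∧ (k ∈ Z ↔ ¬ c' k)) ↔
      2 ≤ v.val ∧ ((u = z ∧ (o ∈ Z ↔ ¬ c o)) ∨ (u = o ∧ (z ∈ Z ↔ ¬ c z))) ∧
        ¬ ∃ k, u < k ∧ k < v ∧ k ≠ o ∧ (k ∈ Z ↔ ¬ c k) := by
  have hzo : z ≠ o := fun h => by simp [Fin.ext_iff, hz, ho] at h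
  have hD : (∃ k, u < k ∧ k < v ∧ (k ∈ Z ↔ ¬ c k)) ↔
      (∃ k, u < k ∧ k < v ∧ k ≠ o ∧ (k ∈ Z ↔ ¬ c k)) ∨ (u = z ∧ 2 ≤ v.val ∧ (o ∈ Z ↔ ¬ c o)) := by
    constructor
    · rintro ⟨k, hk₁, hk₂, hk⟩
      by_cases hko : k = o
      · subst hko
        rw [Fin.lt_def] at hk₁ hk₂
        exact .inr ⟨Fin.ext (by omega), by omega, hk⟩
      · exact .inl ⟨k, hk₁, hk₂, hko, hk⟩
    · rintro (⟨k, hk₁, hk₂, -, hk⟩ | ⟨rfl, hv, ho'⟩)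
      · exact ⟨k, hk₁, hk₂, hk⟩
      · exact ⟨o, by rw [Fin.lt_def]; omega, by rw [Fin.lt_def]; omega, ho'⟩
  have hD' : (∃ k, (Equiv.swap z o u).val < (Equiv.swap z o k).val ∧
          (Equiv.swap z o k).val < (Equiv.swap z o v).val ∧ (k ∈ Z ↔ ¬ c' k)) ↔
      (∃ k, u < k ∧ k < v ∧ k ≠ o ∧ (k ∈ Z ↔ ¬ c k)) ∨ (u = o ∧ 2 ≤ v.val ∧ (z ∈ Z ↔ ¬ c z)) := by
    constructor
    · rintro ⟨k, hk₁, hk₂, hk⟩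
      rw [hc'] at hk
      rcases (swap_zero_one_between_iff hz ho huv).1 ⟨hk₁, hk₂⟩ with
        ⟨hk₁, hk₂, hko⟩ | ⟨rfl, rfl, hv⟩
      · exact .inl ⟨k, hk₁, hk₂, hko, by simpa [hko] using hk⟩
      · exact .inr ⟨rfl, hv, by simpa [hzo] using hk⟩
    · rintro (⟨k, hk₁, hk₂, hko, hk⟩ | ⟨rfl, hv, hk⟩)
      · obtain ⟨h₁, h₂⟩ := (swap_zero_one_between_iff hz ho huv).2 (.inl ⟨hk₁, hk₂, hko⟩)
        exact ⟨k, h₁, h₂, by simpa [hc', hko] using hk⟩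
      · obtain ⟨h₁, h₂⟩ := (swap_zero_one_between_iff hz ho huv).2 (.inr ⟨rfl, rfl, hv⟩)
        exact ⟨z, h₁, h₂, by simpa [hc', hzo] using hk⟩
  rw [hD, hD']
  by_cases hA : ∃ k, u < k ∧ k < v ∧ k ≠ o ∧ (k ∈ Z ↔ ¬ c k)
  · simp only [hA, true_or, iff_self, not_true_eq_false, and_false]
  · simp only [hA, false_or]
    rcases eq_or_ne u z with rfl | huz
    · simp [hzo]
    · simpa [huz] using and_left_comm

/- The prescription reads: `u` and `v` are out, the other one of `z, o` is in iff it is not a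
collider, and every vertex strictly between `o` and `v` is in iff it is a collider. -/
theorem swap_zero_one_mismatch_iff_prescribed_below {c : Fin n → Prop} {u v : Fin n} (huv : u < v)
    (Z : Finset (Fin n)) :
    (u ∉ Z ∧ v ∉ Z ∧ 2 ≤ v.val ∧ ((u = z ∧ (o ∈ Z ↔ ¬ c o)) ∨ (u = o ∧ (z ∈ Z ↔ ¬ c z))) ∧
        ¬ ∃ k, u < k ∧ k < v ∧ k ≠ o ∧ (k ∈ Z ↔ ¬ c k)) ↔
      u.val ≤ 1 ∧ 2 ≤ v.val ∧ ∀ k ≤ v, (k ∈ Z ↔ k ≠ u ∧ k ≠ v ∧ (k.val ≤ 1 ↔ ¬ c k)) := by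
  rw [Fin.lt_def] at huv
  constructor
  · rintro ⟨hu, hv, h2, hcase, hA⟩
    have hu1 : u.val ≤ 1 := by rcases hcase with ⟨rfl, -⟩ | ⟨rfl, -⟩ <;> omega
    refine ⟨hu1, h2, fun k hk => ?_⟩
    rcases eq_or_ne k u with rfl | hku
    · simpa using hu
    rcases eq_or_ne k v with rfl | hkv
    · simpa using hv
    have hku' : k.val ≠ u.val := fun h => hku (Fin.ext h)
    by_cases hk1 : k.val ≤ 1
    · rcases hcase with ⟨rfl, h⟩ | ⟨rfl, h⟩
      · obtain rfl : k = o := Fin.ext (by omega)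
        simpa [hku, hkv, ho] using h
      · obtain rfl : k = z := Fin.ext (by omega)
        simpa [hku, hkv, hz] using h
    · have hko : k ≠ o := fun h => hk1 (by simp [h, ho])
      have := fun hk' => hA ⟨k, Fin.lt_def.2 (by omega), lt_of_le_of_ne hk hkv, hko, hk'⟩
      simp only [hku, hkv, hk1, ne_eq, not_false_eq_true, false_iff, true_and]
      tauto
  · rintro ⟨hu1, h2, hpin⟩
    refine ⟨fun h => by simpa using (hpin u huv.le).1 h,
      fun h => by simpa using (hpin v le_rfl).1 h, h2, ?_, ?_⟩
    · rcases Nat.le_one_iff_eq_zero_or_eq_one.1 hu1 with hu | hu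
      · obtain rfl : u = z := Fin.ext (by omega)
        have := hpin o (Fin.le_def.2 (by omega))
        have hou : o ≠ u := fun h => by have := congrArg Fin.val h; omega
        have hov : o ≠ v := fun h => by have := congrArg Fin.val h; omega
        exact .inl ⟨rfl, by simpa [hou, hov, ho] using this⟩
      · obtain rfl : u = o := Fin.ext (by omega)
        have := hpin z (Fin.le_def.2 (by omega))
        have hzu : z ≠ u := fun h => by have := congrArg Fin.val h; omega
        have hzv : z ≠ v := fun h => by have := congrArg Fin.val h; omega
        exact .inr ⟨rfl, by simpa [hzu, hzv, hz] using this⟩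
    · rintro ⟨k, hk₁, hk₂, hko, hk⟩
      have hk1 : ¬ k.val ≤ 1 := by
        have : k.val ≠ 1 := fun h => hko (Fin.ext (h.trans ho.symm))
        rw [Fin.lt_def] at hk₁
        omega
      have := hpin k hk₂.le
      simp only [ne_of_gt hk₁, hk₂.ne, hk1, ne_eq, not_false_eq_true, true_and] at this
      tauto

theorem dSep_iff_exists_swap_zero_one_between [NeZero n] {D' : Fin n → Fin n → Prop}
    (hD' : IsDAG D') (hskel' : Skel D' = (SimpleGraph.pathGraph n).comap (Equiv.swap z o))
    {u v : Fin n} (huv : u < v) (Z : Finset (Fin n)) :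
    DSep D' u v Z ↔ ∃ k, (Equiv.swap z o u).val < (Equiv.swap z o k).val ∧
      (Equiv.swap z o k).val < (Equiv.swap z o v).val ∧ (k ∈ Z ↔ ¬ IsColliderVertex D' k) := by
  by_cases h : (Equiv.swap z o u).val < (Equiv.swap z o v).val
  · exact dSep_iff_exists_between hD' hskel' h Z
  -- only the pair `(z, o)` changes order under the swap, and it stays adjacent
  have hadj : (Equiv.swap z o v).val + 1 = (Equiv.swap z o u).val := by
    rw [Fin.lt_def] at huv
    simp only [val_swap_zero_one hz ho] at h ⊢
    split_ifs at h ⊢ <;> omega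
  refine iff_of_false (not_dSep_of_arc huv.ne ((arc_iff_of_skel hD' hskel').2 (.inr hadj)) Z) ?_
  rintro ⟨k, h₁, h₂, -⟩
  omega

end SwapZeroOne

open Finset

theorem card_filter_forall_mem_iff {α : Type*} [Fintype α] [DecidableEq α] (S : Finset α)
    (f : α → Prop) [DecidablePred f] :
    #{Z : Finset α | ∀ k ∈ S, (k ∈ Z ↔ f k)} = 2 ^ (Fintype.card α - #S) := by
  have himage : ({Z : Finset α | ∀ k ∈ S, (k ∈ Z ↔ f k)} : Finset (Finset α)) =
      Sᶜ.powerset.image (· ∪ S.filter f) := by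
    ext Z
    simp only [mem_filter, mem_univ, true_and, mem_image, mem_powerset]
    constructor
    · intro h
      refine ⟨Z \ S, fun x hx => by simp_all, ext fun x => ?_⟩
      by_cases hx : x ∈ S <;> simp [hx, h]
    · rintro ⟨W, hW, rfl⟩ k hk
      have : k ∉ W := fun h => by simpa [hk] using hW h
      simp [hk, this]
  rw [himage, card_image_of_injOn, card_powerset, card_compl]
  intro W₁ hW₁ W₂ hW₂ h
  simp only [coe_powerset, Set.mem_preimage, Set.mem_powerset_iff, coe_subset] at hW₁ hW₂
  ext x
  have := congrArg (x ∈ ·) h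
  by_cases hx : x ∈ S
  · simp only at this
    have h1 : x ∉ W₁ := fun h => by simpa [hx] using hW₁ h
    have h2 : x ∉ W₂ := fun h => by simpa [hx] using hW₂ h
    simp [h1, h2]
  · simpa [hx] using this

theorem ncard_triples_prescribed_below {n : ℕ} (U V : Finset (Fin n))
    (f : Fin n → Fin n → Fin n → Prop) :
    Set.ncard {t : Fin n × Fin n × Finset (Fin n) |
        t.1 ∈ U ∧ t.2.1 ∈ V ∧ ∀ k ≤ t.2.1, (k ∈ t.2.2 ↔ f t.1 t.2.1 k)} =
      #U * ∑ v ∈ V, 2 ^ (n - (v + 1)) := by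
  classical
  have hset : {t : Fin n × Fin n × Finset (Fin n) |
        t.1 ∈ U ∧ t.2.1 ∈ V ∧ ∀ k ≤ t.2.1, (k ∈ t.2.2 ↔ f t.1 t.2.1 k)} =
      ↑({t ∈ U ×ˢ V ×ˢ univ | ∀ k ∈ Iic t.2.1, (k ∈ t.2.2 ↔ f t.1 t.2.1 k)} :
        Finset (Fin n × Fin n × Finset (Fin n))) := by
    ext t
    simp [and_assoc]
  rw [hset, Set.ncard_coe_finset, card_filter, sum_product, ← smul_eq_mul, ← sum_const]
  refine sum_congr rfl fun u _ => ?_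
  rw [sum_product]
  refine sum_congr rfl fun v _ => ?_
  rw [← card_filter]
  have := card_filter_forall_mem_iff (Iic v) (f u v)
  rw [Fintype.card_fin, Fin.card_Iic] at this
  convert this

theorem sum_two_pow_of_two_le {n : ℕ} :
    ∑ v : Fin n with 2 ≤ v.val, 2 ^ (n - (v + 1)) = 2 ^ (n - 2) - 1 := by
  rw [sum_filter, Fin.sum_univ_eq_sum_range (fun i => if 2 ≤ i then 2 ^ (n - (i + 1)) else 0),
    ← sum_range_reflect]
  have : ∀ j ∈ range n, (if 2 ≤ n - 1 - j then 2 ^ (n - (n - 1 - j + 1)) else 0) =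
      if j < n - 2 then 2 ^ j else 0 := by
    intro j hj
    rw [mem_range] at hj
    split_ifs <;> first | omega | congr 1; omega
  rw [sum_congr rfl this, ← sum_filter, show {j ∈ range n | j < n - 2} = range (n - 2) by
    ext; simp; omega, Nat.geomSum_eq le_rfl]
  simp

theorem swapped_path_dag_distance {n : ℕ} [NeZero n] (hn : 3 ≤ n)
    (D D' : Fin n → Fin n → Prop) (hD : IsDAG D) (hD' : IsDAG D')
    (hskel : Skel D = SimpleGraph.pathGraph n)
    (hskel' : Skel D' = (SimpleGraph.pathGraph n).comap
      ⇑(Equiv.swap (⟨0, by omega⟩ : Fin n) ⟨1, by omega⟩))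
    (hcol : ∀ k : Fin n, IsColliderVertex D' k ↔
      (IsColliderVertex D k ∧ k ≠ ⟨1, by omega⟩)) :
    dSepDist D D' = 2 ^ (n - 1) - 2 := by
  set z : Fin n := ⟨0, by omega⟩
  set o : Fin n := ⟨1, by omega⟩
  have hmismatch (u v : Fin n) (Z : Finset (Fin n)) :
      (u < v ∧ u ∉ Z ∧ v ∉ Z ∧ ¬ (DSep D u v Z ↔ DSep D' u v Z)) ↔
        u ∈ Iic o ∧ v ∈ ({v | 2 ≤ v.val} : Finset (Fin n)) ∧
          ∀ k ≤ v, (k ∈ Z ↔ k ≠ u ∧ k ≠ v ∧ (k.val ≤ 1 ↔ ¬ IsColliderVertex D k)) := by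
    by_cases huv : u < v
    · rw [dSep_iff_exists_between_of_skel_eq_pathGraph hD hskel huv,
        dSep_iff_exists_swap_zero_one_between rfl rfl hD' hskel' huv,
        swap_zero_one_mismatch_iff rfl rfl hcol huv, ← and_assoc, and_iff_right huv,
        swap_zero_one_mismatch_iff_prescribed_below (z := z) (o := o) rfl rfl huv]
      simp only [mem_Iic, mem_filter, mem_univ, true_and, Fin.le_def]
      rfl
    · simp only [huv, false_and, false_iff, mem_Iic, mem_filter, mem_univ, true_and, Fin.le_def,
        not_and]
      exact fun hu hv => absurd (Fin.lt_def.2 (by simp [o] at hu; omega)) huv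
  simp only [dSepDist, hmismatch]
  rw [ncard_triples_prescribed_below
      (f := fun u v k => k ≠ u ∧ k ≠ v ∧ (k.val ≤ 1 ↔ ¬ IsColliderVertex D k)),
    sum_two_pow_of_two_le, Fin.card_Iic]
  have h2 : 2 ^ (n - 1) = 2 * 2 ^ (n - 2) := by rw [← pow_succ']; congr 1; omega
  have h1 : 1 ≤ 2 ^ (n - 2) := Nat.one_le_two_pow
  simp only [o]
  omega
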